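/- arXiv:2403.13440 — 2 statements merged into one kernel-verified Lean document; each statement's English description precedes it below -/
import Mathlib

section
/- Under the hypotheses of the linear dynamic consensus error dynamics ė = -Le + d with constant disturbance direction — specifically L symmetric PSD with spectral gap λ₂ > 0 on 1_N^⊥, d(t) = Π ω constant with Π = I - (1/N)1 1^T — the error satisfies limsup_{t→∞} ‖e(t)‖ ≤ (1/λ₂)‖ω - 1_N ω̄‖, where ω̄ = (1/N)Σ_i ω_i. -/
open Matrix Finset Real Filter

lemma dot_self_nonneg' {N : ℕ} (x : Fin N → ℝ) : 0 ≤ x ⬝ᵥ x :=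
  Finset.sum_nonneg fun _ _ => mul_self_nonneg _

lemma sqrt_dot_eq_norm {N : ℕ} (x : Fin N → ℝ) :
    Real.sqrt (x ⬝ᵥ x) = ‖(WithLp.equiv 2 (Fin N → ℝ)).symm x‖ := by
  rw [EuclideanSpace.norm_eq]
  congr 1
  simp [dotProduct, Real.norm_eq_abs, sq_abs, sq]

lemma dot_le_sqrt_mul {N : ℕ} (x y : Fin N → ℝ) :
    x ⬝ᵥ y ≤ Real.sqrt (x ⬝ᵥ x) * Real.sqrt (y ⬝ᵥ y) := by
  rw [sqrt_dot_eq_norm, sqrt_dot_eq_norm]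
  have h := real_inner_le_norm ((WithLp.equiv 2 (Fin N → ℝ)).symm x)
      ((WithLp.equiv 2 (Fin N → ℝ)).symm y)
  simpa [PiLp.inner_apply, RCLike.inner_apply, dotProduct, mul_comm] using h

lemma sqrt_dot_triangle {N : ℕ} (x y : Fin N → ℝ) :
    Real.sqrt ((x + y) ⬝ᵥ (x + y)) ≤ Real.sqrt (x ⬝ᵥ x) + Real.sqrt (y ⬝ᵥ y) := by
  rw [sqrt_dot_eq_norm, sqrt_dot_eq_norm, sqrt_dot_eq_norm]
  simpa using norm_add_le ((WithLp.equiv 2 (Fin N → ℝ)).symm x)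
      ((WithLp.equiv 2 (Fin N → ℝ)).symm y)

lemma exists_steady {N : ℕ} (L : Matrix (Fin N) (Fin N) ℝ) (lam2 : ℝ) (hlam : 0 < lam2)
    (hsym : Lᵀ = L) (hker : L *ᵥ (fun _ => (1 : ℝ)) = 0)
    (hgap : ∀ x : Fin N → ℝ, x ⬝ᵥ (fun _ => (1 : ℝ)) = 0 →
        lam2 * (x ⬝ᵥ x) ≤ x ⬝ᵥ (L *ᵥ x))
    (d : Fin N → ℝ) (hd : d ⬝ᵥ (fun _ => (1 : ℝ)) = 0) :
    ∃ v : Fin N → ℝ, L *ᵥ v = d ∧ v ⬝ᵥ (fun _ => (1 : ℝ)) = 0 := by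
  let φ : (Fin N → ℝ) →ₗ[ℝ] ℝ :=
    { toFun := fun x => x ⬝ᵥ (fun _ => (1 : ℝ))
      map_add' := fun a b => by simp [add_dotProduct]
      map_smul' := fun c a => by simp [smul_dotProduct] }
  let W := LinearMap.ker φ
  have hmem : ∀ x : Fin N → ℝ, x ∈ W ↔ x ⬝ᵥ (fun _ => (1 : ℝ)) = 0 := fun x => Iff.rfl
  have hmaps : ∀ x ∈ W, L.mulVecLin x ∈ W := by
    intro x hx
    rw [hmem]
    show (L *ᵥ x) ⬝ᵥ (fun _ => (1 : ℝ)) = 0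
    rw [dotProduct_comm, Matrix.dotProduct_mulVec, ← Matrix.mulVec_transpose, hsym,
      hker]
    simp
  let S : W →ₗ[ℝ] W := (L.mulVecLin).restrict hmaps
  have hinj : Function.Injective S := by
    rw [injective_iff_map_eq_zero]
    rintro ⟨x, hx⟩ h0
    have hLx : L *ᵥ x = 0 := congrArg Subtype.val h0
    have := hgap x hx
    rw [hLx] at this
    simp only [dotProduct_zero] at this
    have hxx : x ⬝ᵥ x = 0 := by nlinarith [dot_self_nonneg' x]
    exact Subtype.ext (dotProduct_self_eq_zero.mp hxx)
  have hsurj : Function.Surjective S := (LinearMap.injective_iff_surjective).mp hinj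
  obtain ⟨⟨v, hv⟩, hSv⟩ := hsurj ⟨d, (hmem d).mpr hd⟩
  exact ⟨v, congrArg Subtype.val hSv, hv⟩

theorem kuramoto_linearized_asymptotic_error_bound
    (N : ℕ) (hN : 1 ≤ N) (L : Matrix (Fin N) (Fin N) ℝ) (lam2 : ℝ)
    (hlam : 0 < lam2) (hsym : Lᵀ = L)
    (hpsd : ∀ x : Fin N → ℝ, 0 ≤ x ⬝ᵥ (L *ᵥ x))
    (hker : L *ᵥ (fun _ => (1 : ℝ)) = 0)
    (hgap : ∀ x : Fin N → ℝ, x ⬝ᵥ (fun _ => (1 : ℝ)) = 0 →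
        lam2 * (x ⬝ᵥ x) ≤ x ⬝ᵥ (L *ᵥ x))
    (ω : Fin N → ℝ) (ωbar : ℝ) (hωbar : ωbar = (1 / N : ℝ) * ∑ i, ω i)
    (e : ℝ → Fin N → ℝ)
    (heperp : ∀ t, e t ⬝ᵥ (fun _ => (1 : ℝ)) = 0)
    (he : ∀ t, ∀ i, HasDerivAt (fun s => e s i)
        (-(L *ᵥ e t) i + (ω i - ωbar)) t) :
    limsup (fun t => Real.sqrt (e t ⬝ᵥ e t)) atTop
      ≤ (1 / lam2) * Real.sqrt ((fun i => ω i - ωbar) ⬝ᵥ (fun i => ω i - ωbar)) := by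
  set d : Fin N → ℝ := fun i => ω i - ωbar with hd_def
  -- d ⟂ 1
  have hd : d ⬝ᵥ (fun _ => (1 : ℝ)) = 0 := by
    have hN0 : (N : ℝ) ≠ 0 := Nat.cast_ne_zero.mpr (by omega)
    simp only [hd_def, dotProduct, mul_one, Finset.sum_sub_distrib, Finset.sum_const,
      Finset.card_univ, Fintype.card_fin, nsmul_eq_mul, hωbar]
    field_simp
    ring
  obtain ⟨v, hLv, hvperp⟩ := exists_steady L lam2 hlam hsym hker hgap d hd
  -- the steady-state bound
  have hvbound : Real.sqrt (v ⬝ᵥ v) ≤ (1 / lam2) * Real.sqrt (d ⬝ᵥ d) := by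
    have h1 : lam2 * (v ⬝ᵥ v) ≤ v ⬝ᵥ d := by
      have := hgap v hvperp
      rwa [hLv] at this
    have h2 : v ⬝ᵥ d ≤ Real.sqrt (v ⬝ᵥ v) * Real.sqrt (d ⬝ᵥ d) := dot_le_sqrt_mul v d
    set a := Real.sqrt (v ⬝ᵥ v) with ha
    set b := Real.sqrt (d ⬝ᵥ d) with hb
    have ha2 : a ^ 2 = v ⬝ᵥ v := Real.sq_sqrt (dot_self_nonneg' v)
    have ha0 : 0 ≤ a := Real.sqrt_nonneg _
    have hb0 : 0 ≤ b := Real.sqrt_nonneg _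
    rcases eq_or_lt_of_le ha0 with h | h
    · rw [← h]; positivity
    · have key : lam2 * a ≤ b := by nlinarith
      have heq : a = (1 / lam2) * (lam2 * a) := by field_simp
      rw [heq]
      exact mul_le_mul_of_nonneg_left key (by positivity)
  -- u := e - v dynamics
  set u : ℝ → Fin N → ℝ := fun t j => e t j - v j with hu_def
  have hu : ∀ t, ∀ i, HasDerivAt (fun s => u s i) (-(L *ᵥ u t) i) t := by
    intro t i
    have h := (he t i).sub_const (v i)
    have : -(L *ᵥ e t) i + d i = -(L *ᵥ u t) i := by
      have : L *ᵥ u t = L *ᵥ e t - L *ᵥ v := by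
        rw [← Matrix.mulVec_sub]; rfl
      rw [this, hLv]
      simp only [Pi.sub_apply]
      ring
    rw [← this]
    exact h
  have huperp : ∀ t, u t ⬝ᵥ (fun _ => (1 : ℝ)) = 0 := by
    intro t
    have : u t = e t - v := rfl
    rw [this, sub_dotProduct, heperp t, hvperp, sub_zero]
  -- Lyapunov function
  set V : ℝ → ℝ := fun t => u t ⬝ᵥ u t with hV_def
  have hV : ∀ t, HasDerivAt V (2 * (u t ⬝ᵥ (-(L *ᵥ u t)))) t := by
    intro t
    have h : HasDerivAt (fun s => ∑ i, u s i * u s i)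
        (∑ i, ((-(L *ᵥ u t) i) * u t i + u t i * (-(L *ᵥ u t) i))) t := by
      apply HasDerivAt.fun_sum
      intro i _
      exact (hu t i).mul (hu t i)
    convert h using 1
    · rfl
    simp only [dotProduct, Pi.neg_apply, Finset.mul_sum]
    congr 1; ext i; ring
  have hVderiv_le : ∀ t, 2 * (u t ⬝ᵥ (-(L *ᵥ u t))) ≤ -(2 * lam2) * V t := by
    intro t
    have := hgap (u t) (huperp t)
    have h : u t ⬝ᵥ (-(L *ᵥ u t)) = -(u t ⬝ᵥ (L *ᵥ u t)) := by
      simp [dotProduct_neg]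
    rw [h]
    simp only [hV_def]
    nlinarith
  -- g := V * exp(2 lam2 t) is antitone
  set g : ℝ → ℝ := fun t => V t * Real.exp (2 * lam2 * t) with hg_def
  have hexp : ∀ t : ℝ, HasDerivAt (fun s : ℝ => Real.exp (2 * lam2 * s))
      (Real.exp (2 * lam2 * t) * (2 * lam2)) t := by
    intro t
    simpa using ((hasDerivAt_id t).const_mul (2 * lam2)).exp
  have hg : ∀ t, HasDerivAt g
      (2 * (u t ⬝ᵥ (-(L *ᵥ u t))) * Real.exp (2 * lam2 * t)
        + V t * (Real.exp (2 * lam2 * t) * (2 * lam2))) t := by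
    intro t
    exact (hV t).mul (hexp t)
  have hganti : Antitone g := by
    apply antitone_of_deriv_nonpos
    · exact fun t => (hg t).differentiableAt
    · intro t
      rw [(hg t).deriv]
      have h1 := hVderiv_le t
      have h2 := Real.exp_pos (2 * lam2 * t)
      nlinarith
  -- V tends to 0
  have hVnonneg : ∀ t, 0 ≤ V t := fun t => dot_self_nonneg' (u t)
  have hVle : ∀ t, 0 ≤ t → V t ≤ g 0 * Real.exp (-(2 * lam2 * t)) := by
    intro t ht
    have := hganti ht
    simp only [hg_def, mul_zero, Real.exp_zero, mul_one] at this ⊢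
    have h2 := Real.exp_pos (2 * lam2 * t)
    rw [Real.exp_neg, ← div_eq_mul_inv, le_div_iff₀ h2]
    exact this
  have hVtends : Tendsto V atTop (nhds 0) := by
    have hbound : Tendsto (fun t => g 0 * Real.exp (-(2 * lam2 * t))) atTop (nhds 0) := by
      have h1 : Tendsto (fun t : ℝ => 2 * lam2 * t) atTop atTop := by
        apply Filter.Tendsto.const_mul_atTop (by positivity)
        exact tendsto_id
      have h2 : Tendsto (fun t : ℝ => Real.exp (-(2 * lam2 * t))) atTop (nhds 0) :=
        Real.tendsto_exp_neg_atTop_nhds_zero.comp h1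
      simpa using h2.const_mul (g 0)
    rw [tendsto_order]
    constructor
    · intro b hb
      filter_upwards with t using lt_of_lt_of_le hb (hVnonneg t)
    · intro b hb
      have h1 := (tendsto_order.mp hbound).2 b hb
      filter_upwards [h1, eventually_ge_atTop (0:ℝ)] with t ht1 ht2
      exact lt_of_le_of_lt (hVle t ht2) ht1
  have hsqrtV : Tendsto (fun t => Real.sqrt (V t)) atTop (nhds 0) := by
    have := (Real.continuous_sqrt.tendsto 0).comp hVtends
    simpa [Function.comp_def] using this
  -- final limsup argument
  have hG : Tendsto (fun t => Real.sqrt (V t) + Real.sqrt (v ⬝ᵥ v)) atTop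
      (nhds (Real.sqrt (v ⬝ᵥ v))) := by
    simpa using hsqrtV.add_const (Real.sqrt (v ⬝ᵥ v))
  have hptwise : ∀ t, Real.sqrt (e t ⬝ᵥ e t) ≤ Real.sqrt (V t) + Real.sqrt (v ⬝ᵥ v) := by
    intro t
    have he_eq : e t = u t + v := by funext j; simp [hu_def]
    calc Real.sqrt (e t ⬝ᵥ e t) = Real.sqrt ((u t + v) ⬝ᵥ (u t + v)) := by rw [← he_eq]
      _ ≤ Real.sqrt (u t ⬝ᵥ u t) + Real.sqrt (v ⬝ᵥ v) := sqrt_dot_triangle _ _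
  have hlimsup : limsup (fun t => Real.sqrt (e t ⬝ᵥ e t)) atTop ≤ Real.sqrt (v ⬝ᵥ v) := by
    have h1 : limsup (fun t => Real.sqrt (e t ⬝ᵥ e t)) atTop
        ≤ limsup (fun t => Real.sqrt (V t) + Real.sqrt (v ⬝ᵥ v)) atTop := by
      apply limsup_le_limsup
      · filter_upwards with t using hptwise t
      · apply IsBoundedUnder.isCoboundedUnder_le
        exact isBoundedUnder_of ⟨0, fun t => Real.sqrt_nonneg _⟩
      · exact hG.isBoundedUnder_le
    rw [hG.limsup_eq] at h1
    exact h1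
  exact le_trans hlimsup hvbound
end

section
/- For a phase-locked equilibrium of the second stage of the extended Kuramoto model with common input frequency: if 0 = (K/N) B̃ sin(B^T θ) componentwise (where sin acts entrywise) for the all-to-all network, and all pairwise differences satisfy |θ_i - θ_j| < π, then θ = c·1_N for some constant c, i.e., the phases are exactly synchronized. -/
open Finset Real

theorem all_to_all_phase_locked_equilibrium_is_synchronized
    (N : ℕ) (hN : 2 ≤ N) (K : ℝ) (hK : 0 < K)
    (θ : Fin N → ℝ)
    (heq : ∀ i, ∑ j ∈ univ \ {i}, Real.sin (θ j - θ i) = 0)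
    (hclose : ∀ i j, |θ i - θ j| < Real.pi) :
    ∀ i j, θ i = θ j := by
  have hne : (univ : Finset (Fin N)).Nonempty := by
    refine univ_nonempty_iff.mpr ?_
    exact Fin.pos_iff_nonempty.mp (by omega)
  obtain ⟨i₀, -, hmax⟩ := Finset.exists_max_image univ θ hne
  have hall : ∀ j, θ j = θ i₀ := by
    have hzero : ∀ j ∈ univ \ {i₀}, Real.sin (θ j - θ i₀) = 0 := by
      have hnonpos : ∀ j ∈ univ \ {i₀}, Real.sin (θ j - θ i₀) ≤ 0 := by
        intro j _
        apply Real.sin_nonpos_of_nonpos_of_neg_pi_le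
        · linarith [hmax j (mem_univ j)]
        · have := abs_lt.mp (hclose j i₀)
          linarith [this.1]
      intro j hj
      have := (Finset.sum_eq_zero_iff_of_nonpos hnonpos).mp (heq i₀) j hj
      linarith [hnonpos j hj]
    intro j
    by_cases h : j = i₀
    · rw [h]
    · have hj : j ∈ univ \ {i₀} := by simp [h]
      have hs := hzero j hj
      have habs := abs_lt.mp (hclose j i₀)
      have := (Real.sin_eq_zero_iff_of_lt_of_lt (by linarith [habs.1]) (by linarith [habs.2])).mp hs
      linarith
  intro i j
  rw [hall i, hall j]
end
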